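/- Every non-Archimedean ordered field F fails the Limit of Derivatives Property: there exists f : F → F continuous at 0, differentiable on F \ {0} with lim_{t→0} f'(t) = 0, such that either f is not differentiable at 0 or f'(0) ≠ 0. -/

import Mathlib

/-!
Let `r` send every `t` to a fixed representative of its Archimedean class, so `r 0 = 0`.
Off `0` the Archimedean class is locally constant, hence so is `r`, with derivative `0`.
If `ω` exceeds every natural number, then `|r x| ≤ n |x| < ω |x|` for some `n : ℕ`, so `r` is
continuous at `0`. Since `r ∘ r = r` and `r` is even, the difference quotient `r x / x` equals
`1` along `x = r y` and `-1` along `x = -r y`, and both tend to `0` with `y`; so `r` has no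
derivative at `0`.
-/

open Filter Topology

/-- The derivative of `f : F → F` at `a` in the order topology. -/
def HasDerivO {F : Type*} [Field F] [LinearOrder F] [IsStrictOrderedRing F] [TopologicalSpace F]
    (f : F → F) (L a : F) : Prop :=
  Tendsto (fun x => (f x - f a) / (x - a)) (𝓝[≠] a) (𝓝 L)

section Deriv

variable {F : Type*} [Field F] [LinearOrder F] [IsStrictOrderedRing F] [TopologicalSpace F]

lemma hasDerivO_zero_of_eventually_eq {f : F → F} {a : F} (h : ∀ᶠ x in 𝓝 a, f x = f a) :
    HasDerivO f 0 a := by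
  refine tendsto_const_nhds.congr' ?_
  filter_upwards [nhdsWithin_le_nhds h] with x hx
  rw [hx, sub_self, zero_div]

lemma HasDerivO.eq_of_tendsto [T2Space F] {α : Type*} {l : Filter α} [l.NeBot]
    {f : F → F} {g : α → F} {L a k : F} (hf : HasDerivO f L a) (hg : Tendsto g l (𝓝[≠] a))
    (hk : ∀ᶠ x in l, (f (g x) - f a) / (g x - a) = k) : L = k :=
  tendsto_nhds_unique ((hf.comp hg).congr' hk) tendsto_const_nhds

end Deriv

namespace ArchimedeanClass

variable {F : Type*} [Field F] [LinearOrder F] [IsStrictOrderedRing F]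
  [TopologicalSpace F] [OrderTopology F]

lemma eventually_mk_eq_mk {t : F} (ht : t ≠ 0) : ∀ᶠ x in 𝓝 t, mk x = mk t := by
  filter_upwards [eventually_abs_sub_lt t (half_pos (abs_pos.2 ht))] with x hx
  have hxt := abs_sub_abs_le_abs_sub x t
  have htx := abs_sub_abs_le_abs_sub t x
  rw [abs_sub_comm] at htx
  refine mk_eq_mk.mpr ⟨⟨2, ?_⟩, ⟨2, ?_⟩⟩ <;> rw [two_nsmul] <;> linarith [abs_nonneg t]

lemma eventually_mk_lt_mk_nhds_zero {ω : F} (hω : ∀ n : ℕ, (n : F) < ω) {c : F}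
    (hc : c ≠ 0) : ∀ᶠ x in 𝓝 0, mk c < mk x := by
  have hω₀ : 0 < ω := (Nat.cast_nonneg 0).trans_lt (hω 0)
  have hδ : 0 < |c| / ω := div_pos (abs_pos.2 hc) hω₀
  have hcδ : mk c < mk (|c| / ω) := by
    refine mk_lt_mk.mpr fun n => ?_
    rw [nsmul_eq_mul, abs_of_pos hδ, mul_div_assoc', div_lt_iff₀ hω₀, mul_comm |c|]
    exact mul_lt_mul_of_pos_right (hω n) (abs_pos.2 hc)
  filter_upwards [eventually_abs_sub_lt 0 hδ] with x hx
  rw [sub_zero] at hx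
  exact hcδ.trans_le (mk_le_mk_of_abs (by rw [abs_of_pos hδ]; exact hx.le))

lemma tendsto_nhds_zero_of_mk_le_mk {ω : F} (hω : ∀ n : ℕ, (n : F) < ω) {g : F → F}
    (hg : ∀ x, mk x ≤ mk (g x)) : Tendsto g (𝓝 0) (𝓝 0) := by
  refine LinearOrderedAddCommGroup.tendsto_nhds.mpr fun ε hε => ?_
  filter_upwards [eventually_mk_lt_mk_nhds_zero hω hε.ne'] with x hx
  rw [sub_zero]
  exact lt_of_mk_lt_mk_of_nonneg (by rw [mk_abs]; exact hx.trans_le (hg x)) hε.le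

end ArchimedeanClass

section OrderedGroup

variable {M : Type*} [AddCommGroup M] [LinearOrder M] [IsOrderedAddMonoid M]

noncomputable def archimedeanRep (t : M) : M := (ArchimedeanClass.mk t).out

@[simp]
lemma ArchimedeanClass.mk_archimedeanRep (t : M) : mk (archimedeanRep t) = mk t :=
  mk_out _

@[simp]
lemma archimedeanRep_zero : archimedeanRep (0 : M) = 0 := by
  simp [archimedeanRep]

lemma archimedeanRep_ne_zero {t : M} (ht : t ≠ 0) : archimedeanRep t ≠ 0 := by
  simpa [← ArchimedeanClass.mk_eq_top_iff] using ht

@[simp]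
lemma archimedeanRep_neg (t : M) : archimedeanRep (-t) = archimedeanRep t := by
  simp [archimedeanRep]

@[simp]
lemma archimedeanRep_archimedeanRep (t : M) :
    archimedeanRep (archimedeanRep t) = archimedeanRep t := by
  simp [archimedeanRep]

end OrderedGroup

section NonArchimedean

variable {F : Type*} [Field F] [LinearOrder F] [IsStrictOrderedRing F]
  [TopologicalSpace F] [OrderTopology F] {ω : F}

lemma tendsto_archimedeanRep_nhds_zero (hω : ∀ n : ℕ, (n : F) < ω) :
    Tendsto archimedeanRep (𝓝 0) (𝓝 (0 : F)) :=
  ArchimedeanClass.tendsto_nhds_zero_of_mk_le_mk hω fun x =>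
    (ArchimedeanClass.mk_archimedeanRep x).ge

lemma hasDerivO_archimedeanRep {t : F} (ht : t ≠ 0) : HasDerivO archimedeanRep 0 t :=
  hasDerivO_zero_of_eventually_eq <|
    (ArchimedeanClass.eventually_mk_eq_mk ht).mono fun _ hx => congrArg ArchimedeanClass.out hx

lemma not_hasDerivO_archimedeanRep_zero (hω : ∀ n : ℕ, (n : F) < ω) (L : F) :
    ¬HasDerivO archimedeanRep L 0 := by
  intro hL
  have hrep : Tendsto archimedeanRep (𝓝[≠] 0) (𝓝 (0 : F)) :=
    (tendsto_archimedeanRep_nhds_zero hω).mono_left nhdsWithin_le_nhds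
  have hne : ∀ᶠ x in 𝓝[≠] (0 : F), archimedeanRep x ≠ 0 :=
    eventually_nhdsWithin_of_forall fun _ => archimedeanRep_ne_zero
  have h_one : L = 1 :=
    hL.eq_of_tendsto (tendsto_nhdsWithin_of_tendsto_nhds_of_eventually_within _ hrep hne) <|
      hne.mono fun x hx => by simp [div_self hx]
  have h_neg_one : L = -1 :=
    hL.eq_of_tendsto (g := fun x => -archimedeanRep x)
      (tendsto_nhdsWithin_of_tendsto_nhds_of_eventually_within _ (by simpa using hrep.neg)
        (hne.mono fun _ => neg_ne_zero.mpr)) <|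
      hne.mono fun x hx => by simp [div_neg, div_self hx]
  linarith

end NonArchimedean

/-- every non-Archimedean ordered field fails the Limit of Derivatives
Property: there is an `f` continuous at `0`, differentiable off `0` with derivative
tending to `0`, which is either non-differentiable at `0` or has nonzero derivative
there. -/
theorem stmt_12 {F : Type*} [Field F] [LinearOrder F] [IsStrictOrderedRing F] [TopologicalSpace F] [OrderTopology F]
    (hna : ∃ x : F, ∀ n : ℕ, (n : F) < x) :
    ∃ f f' : F → F, ContinuousAt f 0 ∧
      (∀ t : F, t ≠ 0 → HasDerivO f (f' t) t) ∧
      Tendsto f' (𝓝[≠] (0 : F)) (𝓝 0) ∧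
      ((¬∃ L : F, HasDerivO f L 0) ∨ (∃ L : F, HasDerivO f L 0 ∧ L ≠ 0)) := by
  obtain ⟨ω, hω⟩ := hna
  exact ⟨archimedeanRep, 0, by simpa [ContinuousAt] using tendsto_archimedeanRep_nhds_zero hω,
    fun _ => hasDerivO_archimedeanRep, tendsto_const_nhds,
    Or.inl fun ⟨L, hL⟩ => not_hasDerivO_archimedeanRep_zero hω L hL⟩
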